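/- Let R be a Noetherian normal domain and let I be a proper nonzero principal ideal of R. Then there exist height one prime ideals P₁, …, P_t of R and positive integers n₁, …, n_t such that I = P₁^(n₁) ∩ ⋯ ∩ P_t^(n_t), where P^(n) denotes the n-th symbolic power of P. -/

import Mathlib

/-- The `n`-th symbolic power of a prime ideal `P`: the contraction to `R` of the
ideal `P^n R_P` of the localization `R_P`. -/
noncomputable def symbolicPower {R : Type*} [CommRing R] (P : Ideal R) [P.IsPrime] (n : ℕ) :
    Ideal R :=
  Ideal.comap (algebraMap R (Localization.AtPrime P))
    (Ideal.map (algebraMap R (Localization.AtPrime P)) (P ^ n))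

/-- A prime ideal of a domain has height one if it is nonzero and the only prime ideal
strictly below it is the zero ideal. -/
def HeightOne {R : Type*} [CommRing R] (P : Ideal R) : Prop :=
  P.IsPrime ∧ P ≠ ⊥ ∧ ∀ Q : Ideal R, Q.IsPrime → Q < P → Q = ⊥

/-!
Take a minimal primary decomposition of `(a)`. The radical `P` of each component is an
associated prime, `P = ((a) : b)`, so in `R_P` the maximal ideal is `((a) : b)` as well. If
`b / a` stabilized it, integral closedness would put `b` in `(a)`; hence `b y = u a` for some
`y ∈ P R_P` and unit `u`, and then `P R_P = (y)`. So `R_P` is a DVR: `P` has height one and the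
`P`-primary component, being the contraction of its extension, is the contraction of a power
of `P R_P`, i.e. a symbolic power of `P`.
-/

open IsLocalRing Submodule

theorem IsIntegrallyClosed.mem_span_singleton_of_forall_mul_mem {S : Type*} [CommRing S]
    [IsDomain S] [IsNoetherianRing S] [IsIntegrallyClosed S] {I : Ideal S} (hI : I ≠ ⊥)
    {a b : S} (ha : a ≠ 0) (h : ∀ m ∈ I, ∃ k ∈ I, k * a = b * m) : b ∈ Ideal.span {a} := by
  let K := FractionRing S
  have ha' : algebraMap S K a ≠ 0 := IsFractionRing.to_map_eq_zero_iff.not.mpr ha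
  let x : K := algebraMap S K b / algebraMap S K a
  let M := Submodule.map (Algebra.linearMap S K) I
  have hM : M ≠ ⊥ := by
    obtain ⟨m, hm, hm₀⟩ := Submodule.exists_mem_ne_zero_of_ne_bot hI
    exact (Submodule.ne_bot_iff _).mpr
      ⟨_, ⟨m, hm, rfl⟩, IsFractionRing.to_map_eq_zero_iff.not.mpr hm₀⟩
  have hxM : ∀ y ∈ M, x • y ∈ M := by
    rintro _ ⟨m, hm, rfl⟩
    obtain ⟨k, hk, hka⟩ := h m hm
    refine ⟨k, hk, ?_⟩
    rw [Algebra.linearMap_apply, Algebra.linearMap_apply, smul_eq_mul, div_mul_eq_mul_div,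
      eq_div_iff ha', ← map_mul, ← map_mul, hka]
  obtain ⟨y, hy⟩ := IsIntegrallyClosed.algebraMap_eq_of_integral <|
    isIntegral_of_smul_mem_submodule M hM ((IsNoetherian.noetherian I).map _) x hxM
  refine Ideal.mem_span_singleton'.mpr ⟨y, IsFractionRing.injective S K ?_⟩
  rw [map_mul, hy, div_mul_cancel₀ _ ha']

theorem IsLocalRing.maximalIdeal_isPrincipal_of_eq_colon_singleton {S : Type*} [CommRing S]
    [IsDomain S] [IsNoetherianRing S] [IsLocalRing S] [IsIntegrallyClosed S] {a b : S}
    (ha : a ≠ 0) (hm : maximalIdeal S = (Ideal.span {a}).colon {b}) :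
    (maximalIdeal S).IsPrincipal := by
  have hmul : ∀ m ∈ maximalIdeal S, ∃ k, k * a = b * m := fun m hm' ↦ by
    rw [hm, mem_colon_singleton, smul_eq_mul, mul_comm] at hm'
    exact Ideal.mem_span_singleton'.mp hm'
  have hb : b ∉ Ideal.span {a} := fun hb ↦ (maximalIdeal.isMaximal S).ne_top <| by
    rw [hm, colon_eq_top_iff_subset]; simpa using hb
  have hb₀ : b ≠ 0 := by rintro rfl; exact hb (zero_mem _)
  have ha_mem : a ∈ maximalIdeal S := hm ▸ Ideal.le_colon (Ideal.mem_span_singleton_self a)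
  have hm₀ : maximalIdeal S ≠ ⊥ := fun h ↦ ha (by simpa [h] using ha_mem)
  obtain ⟨y₀, hy₀, u, hu⟩ : ∃ y₀ ∈ maximalIdeal S, ∃ u : Sˣ, u * a = b * y₀ := by
    by_contra! H
    refine hb (IsIntegrallyClosed.mem_span_singleton_of_forall_mul_mem hm₀ ha fun m hm' ↦ ?_)
    obtain ⟨k, hk⟩ := hmul m hm'
    exact ⟨k, (mem_maximalIdeal k).mpr fun hk' ↦ H m hm' hk'.unit hk, hk⟩
  have hy : b * (↑u⁻¹ * y₀) = a := by rw [mul_left_comm, ← hu, Units.inv_mul_cancel_left]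
  refine ⟨⟨↑u⁻¹ * y₀, le_antisymm (fun z hz ↦ ?_) ?_⟩⟩
  · obtain ⟨k, hk⟩ := hmul z hz
    rw [← hy, mul_left_comm] at hk
    exact Ideal.mem_span_singleton'.mpr ⟨k, mul_left_cancel₀ hb₀ hk⟩
  · rw [Submodule.span_le, Set.singleton_subset_iff]
    exact Ideal.mul_mem_left _ _ hy₀

section AtPrime

variable {R : Type*} [CommRing R]

theorem Localization.AtPrime.maximalIdeal_eq_colon_map {P I : Ideal R} [P.IsPrime] {b : R}
    (hP : P = I.colon {b}) :
    maximalIdeal (Localization.AtPrime P) =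
      (I.map (algebraMap R (Localization.AtPrime P))).colon {algebraMap R _ b} := by
  refine le_antisymm ?_ fun x hx ↦ ?_
  · rw [← Localization.AtPrime.map_eq_maximalIdeal, Ideal.map_le_iff_le_comap]
    intro p hp
    rw [hP, mem_colon_singleton, smul_eq_mul] at hp
    rw [Ideal.mem_comap, mem_colon_singleton, smul_eq_mul, ← map_mul]
    exact Ideal.mem_map_of_mem _ hp
  · by_contra hxm
    rw [mem_colon_singleton, smul_eq_mul,
      Ideal.unit_mul_mem_iff_mem _ (notMem_maximalIdeal.mp hxm),
      IsLocalization.algebraMap_mem_map_algebraMap_iff P.primeCompl] at hx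
    obtain ⟨s, hs, hsb⟩ := hx
    exact hs (hP ▸ mem_colon_singleton.mpr hsb)

variable [IsDomain R] [IsNoetherianRing R]

theorem Localization.AtPrime.maximalIdeal_isPrincipal_of_mem_associatedPrimes
    [IsIntegrallyClosed R] {a : R} (ha : a ≠ 0) {P : Ideal R} [P.IsPrime]
    (hP : P ∈ (Ideal.span {a}).associatedPrimes) :
    (maximalIdeal (Localization.AtPrime P)).IsPrincipal := by
  obtain ⟨-, b, hPb⟩ := Submodule.isAssociatedPrime_iff.mp hP
  have : IsIntegrallyClosed (Localization.AtPrime P) :=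
    isIntegrallyClosed_of_isLocalization _ P.primeCompl P.primeCompl_le_nonZeroDivisors
  refine maximalIdeal_isPrincipal_of_eq_colon_singleton (a := algebraMap R _ a)
    (b := algebraMap R _ b) ?_ ?_
  · exact (IsLocalization.to_map_eq_zero_iff _ P.primeCompl_le_nonZeroDivisors).not.mpr ha
  · rw [maximalIdeal_eq_colon_map hPb, Ideal.map_span, Set.image_singleton]

theorem heightOne_of_maximalIdeal_atPrime_isPrincipal {P : Ideal R} [hP : P.IsPrime]
    (hP₀ : P ≠ ⊥) (h : (maximalIdeal (Localization.AtPrime P)).IsPrincipal) : HeightOne P := by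
  refine ⟨hP, hP₀, fun Q hQ hQP ↦ by_contra fun hQ₀ ↦ hQP.ne ?_⟩
  obtain ⟨-, hdim⟩ : IsIntegrallyClosed (Localization.AtPrime P) ∧
      ∀ J : Ideal (Localization.AtPrime P), J ≠ ⊥ → J.IsPrime → J = maximalIdeal _ :=
    ((tfae_of_isNoetherianRing_of_isLocalRing_of_isDomain _).out 4 3).mp h
  rw [← Ideal.under_map_of_isLocalizationAtPrime P (S := Localization.AtPrime P) hQP.le,
    hdim _ (Ideal.map_ne_bot_of_ne_bot hQ₀)
      (Ideal.isPrime_map_of_isLocalizationAtPrime P hQP.le),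
    Localization.AtPrime.under_maximalIdeal]

theorem Ideal.IsPrimary.exists_eq_symbolicPower {Q : Ideal R} (hQ : Q.IsPrimary)
    [Q.radical.IsPrime] (hQ₀ : Q ≠ ⊥)
    (h : (maximalIdeal (Localization.AtPrime Q.radical)).IsPrincipal) :
    ∃ n, 0 < n ∧ Q = symbolicPower Q.radical n := by
  have hpow : ∀ J : Ideal (Localization.AtPrime Q.radical), J ≠ ⊥ →
      ∃ n : ℕ, J = maximalIdeal _ ^ n :=
    ((tfae_of_isNoetherianRing_of_isLocalRing_of_isDomain
      (Localization.AtPrime Q.radical)).out 4 6).mp h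
  have hQQ : (Q.map (algebraMap R (Localization.AtPrime Q.radical))).under R = Q :=
    IsLocalization.under_map_of_isPrimary_disjoint Q.radical.primeCompl _ hQ <|
      Set.disjoint_left.mpr fun _ hx hxQ ↦ hx (Ideal.le_radical hxQ)
  obtain ⟨n, hn⟩ := hpow _ (Ideal.map_ne_bot_of_ne_bot hQ₀)
  have hQn : Q = symbolicPower Q.radical n := by
    rw [symbolicPower, Ideal.map_pow, Localization.AtPrime.map_eq_maximalIdeal, ← hn]
    exact hQQ.symm
  refine ⟨n, Nat.pos_of_ne_zero fun hn₀ ↦ hQ.ne_top ?_, hQn⟩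
  rw [hQn, hn₀, symbolicPower, pow_zero, Ideal.one_eq_top, Ideal.map_top, Ideal.comap_top]

theorem Ideal.IsPrimary.exists_heightOne_eq_symbolicPower [IsIntegrallyClosed R] {a : R}
    (ha : a ≠ 0) {Q : Ideal R} (hQ : Q.IsPrimary)
    (hP : Q.radical ∈ (Ideal.span {a}).associatedPrimes) :
    ∃ (_ : Q.radical.IsPrime) (n : ℕ), HeightOne Q.radical ∧ 0 < n ∧
      Q = symbolicPower Q.radical n := by
  obtain ⟨hprime, b, hPb⟩ := Submodule.isAssociatedPrime_iff.mp hP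
  have haP : a ∈ Q.radical := hPb ▸ Ideal.le_colon (Ideal.mem_span_singleton_self a)
  have hP₀ : Q.radical ≠ ⊥ := fun h ↦ ha (by simpa [h] using haP)
  have hQ₀ : Q ≠ ⊥ := fun h ↦ hP₀ (by rw [h, Ideal.radical_bot_of_isReduced])
  have hprinc := Localization.AtPrime.maximalIdeal_isPrincipal_of_mem_associatedPrimes ha hP
  obtain ⟨n, hn, hQn⟩ := hQ.exists_eq_symbolicPower hQ₀ hprinc
  exact ⟨hprime, n, heightOne_of_maximalIdeal_atPrime_isPrincipal hP₀ hprinc, hn, hQn⟩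

end AtPrime

theorem Finset.exists_fin_inf_id_eq_iInf {α : Type*} [CompleteLattice α] (s : Finset α) :
    ∃ (t : ℕ) (e : Fin t → α), (∀ i, e i ∈ s) ∧ s.inf id = ⨅ i, e i :=
  ⟨s.card, fun i ↦ s.equivFin.symm i, fun i ↦ (s.equivFin.symm i).2, by
    rw [Finset.inf_id_eq_sInf, sInf_eq_iInf']
    exact (s.equivFin.symm.iInf_comp (g := fun x : s ↦ (x : α))).symm⟩

theorem volume_limits_stmt0_general {R : Type*} [CommRing R] [IsDomain R] [IsNoetherianRing R]
    [IsIntegrallyClosed R] (I : Ideal R) (hI0 : I ≠ ⊥)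
    (hIprin : I.IsPrincipal) :
    ∃ (t : ℕ) (P : Fin t → Ideal R) (n : Fin t → ℕ) (hP : ∀ i, (P i).IsPrime),
      (∀ i, HeightOne (P i)) ∧ (∀ i, 0 < n i) ∧
      I = ⨅ i, @symbolicPower R _ (P i) (hP i) (n i) := by
  obtain ⟨a, rfl⟩ := hIprin
  have ha : a ≠ 0 := by rintro rfl; simp at hI0
  obtain ⟨s, hs⟩ := Submodule.IsLasker.exists_isMinimalPrimaryDecomposition
    (Submodule.isLasker R R) (Submodule.span R {a})
  obtain ⟨t, Q, hQs, hsQ⟩ := s.exists_fin_inf_id_eq_iInf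
  have hcomp (i : Fin t) :=
    Ideal.IsPrimary.exists_heightOne_eq_symbolicPower ha (hs.primary (hQs i)) <| by
      simpa [colon_univ] using hs.mem_associatedPrimes (hQs i)
  choose hP n hH hn hQ using hcomp
  refine ⟨t, fun i ↦ Ideal.radical (Q i), n, hP, hH, hn, ?_⟩
  rw [← hs.inf_eq, hsQ]
  exact iInf_congr hQ

/-- Let `R` be a Noetherian normal domain and `I` a proper nonzero principal ideal.  Then
there exist height one prime ideals `P₁, …, P_t` and positive integers `n₁, …, n_t` such
that `I = P₁^(n₁) ∩ ⋯ ∩ P_t^(n_t)`. -/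
theorem volume_limits_stmt0 {R : Type*} [CommRing R] [IsDomain R] [IsNoetherianRing R]
    [IsIntegrallyClosed R] (I : Ideal R) (hI0 : I ≠ ⊥) (hItop : I ≠ ⊤)
    (hIprin : I.IsPrincipal) :
    ∃ (t : ℕ) (P : Fin t → Ideal R) (n : Fin t → ℕ) (hP : ∀ i, (P i).IsPrime),
      (∀ i, HeightOne (P i)) ∧ (∀ i, 0 < n i) ∧
      I = ⨅ i, @symbolicPower R _ (P i) (hP i) (n i) :=
  volume_limits_stmt0_general I hI0 hIprin
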